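/- Fix n > 1 and let (x₁, …, x_n) ∈ ker(Φ_n). Write each component as x_k = Σ_{1 ≤ i < j ≤ n} α^{(k)}[j,i]·v[j,i]. Then: (i) α^{(k)}[j,i] = 0 whenever k = i or k = j (equivalently, Π_k(x_k) = 0 for every k); and (ii) for all 1 ≤ a < b < c ≤ n one has α^{(c)}[b,a] = α^{(a)}[c,b] = −α^{(b)}[c,a]. -/

import Mathlib

open Submodule

/-- Index type for the distinguished basis of `V(n)`: pairs `(j,i)` with `i < j`. -/
abbrev VIdx (n : ℕ) := {q : Fin n × Fin n // q.2 < q.1}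

/-- Index type for the distinguished basis of `W(n)`: triples `(j,i,k)` with `i < j`, `i ≤ k`. -/
abbrev WIdx (n : ℕ) := {t : Fin n × Fin n × Fin n // t.2.1 < t.1 ∧ t.2.1 ≤ t.2.2}

/-- The vector space `V(n)` over `F`. -/
abbrev V (F : Type*) [Field F] (n : ℕ) := VIdx n → F

/-- The vector space `W(n)` over `F`. -/
abbrev W (F : Type*) [Field F] (n : ℕ) := WIdx n → F

variable (F : Type*) [Field F] (n : ℕ)

/-- The vector `v[j,i]`, with the conventions `v[i,j] = -v[j,i]` and `v[i,i] = 0`. -/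
noncomputable def v (j i : Fin n) : V F n :=
  if h : i < j then Pi.single (⟨(j, i), h⟩ : VIdx n) 1
  else if h' : j < i then -Pi.single (⟨(i, j), h'⟩ : VIdx n) 1
  else 0

/-- The vector `w[j,i,k]` (the basis vector when `i < j` and `i ≤ k`, zero otherwise). -/
noncomputable def w (j i k : Fin n) : W F n :=
  if h : i < j ∧ i ≤ k then Pi.single (⟨(j, i, k), h⟩ : WIdx n) 1 else 0

/-- The linear map `φ_k : V(n) → W(n)` determined on basis vectors by
`φ_k(v[j,i]) = w[j,i,k]` if `i ≤ k`, and `φ_k(v[j,i]) = w[j,k,i] - w[i,k,j]` if `k < i`. -/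
noncomputable def phi (k : Fin n) : V F n →ₗ[F] W F n :=
  (Pi.basisFun F (VIdx n)).constr F fun q =>
    if q.1.2 ≤ k then w F n q.1.1 q.1.2 k
    else w F n q.1.1 k q.1.2 - w F n q.1.2 k q.1.1

/-- The linear map `Φ_n : V(n)ⁿ → W(n)`, `Φ_n(x₁,…,x_n) = φ₁(x₁) + ⋯ + φ_n(x_n)`. -/
noncomputable def Phi : (Fin n → V F n) →ₗ[F] W F n :=
  ∑ k : Fin n, (phi F n k).comp (LinearMap.proj k)

/-- For `X ≤ V(n)`, the subspace `X* ≤ W(n)`: the span of `φ₁(X) ∪ ⋯ ∪ φ_n(X)`. -/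
noncomputable def starV (X : Submodule F (V F n)) : Submodule F (W F n) :=
  ⨆ k : Fin n, X.map (phi F n k)

/-- For `Y ≤ W(n)`, the subspace `Y* ≤ V(n)`: the intersection `⋂ₖ φ_k⁻¹(Y)`. -/
noncomputable def starW (Y : Submodule F (W F n)) : Submodule F (V F n) :=
  ⨅ k : Fin n, Y.comap (phi F n k)

/-!
The coordinate of `Φ_n(x)` at the basis vector `w[J,I,K]` is
`x_K[J,I] + [I < K < J]·x_I[J,K] − [J < K]·x_I[K,J]`.
At `w[b,a,b]` and `w[b,a,a]` only the first term survives, which gives (i);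
for `a < b < c`, the coordinates at `w[b,a,c]` and `w[c,a,b]` give the two relations of (ii).
-/

section

variable {F n}

lemma w_apply (j i k : Fin n) (t : WIdx n) :
    w F n j i k t = if t.1 = (j, i, k) then 1 else 0 := by
  unfold w
  split_ifs with h ht ht
  · simp [Pi.single_apply, Subtype.ext_iff, ht]
  · simp [Subtype.ext_iff, ht]
  · exact absurd (by simpa [ht] using t.2) h
  · rfl

lemma phi_basisFun_apply (k : Fin n) (q : VIdx n) {J I K : Fin n} (hIJ : I < J) (hIK : I ≤ K) :
    phi F n k (Pi.basisFun F (VIdx n) q) ⟨(J, I, K), hIJ, hIK⟩ =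
      (if k = K ∧ q.1 = (J, I) then 1 else 0)
      + (if (k = I ∧ I < K) ∧ q.1 = (J, K) then 1 else 0)
      - (if k = I ∧ q.1 = (K, J) then 1 else 0) := by
  obtain ⟨⟨b, a⟩, hab⟩ := q
  simp only [phi, Module.Basis.constr_basis, ite_apply, Pi.sub_apply,
    w_apply, Prod.mk.injEq]
  split_ifs <;> first | (exfalso; omega) | ring

lemma sum_mul_ite_and_val_eq (y : V F n) (P : Prop) [Decidable P] (a b : Fin n) :
    ∑ q, y q * (if P ∧ q.1 = (a, b) then 1 else 0) =
      if P then (if h : b < a then y ⟨(a, b), h⟩ else 0) else 0 := by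
  split_ifs with hP hba
  · rw [Fintype.sum_eq_single ⟨(a, b), hba⟩ fun q hq => by
      rw [if_neg fun h => hq (Subtype.ext h.2), mul_zero]]
    simp [hP]
  · refine Fintype.sum_eq_zero _ fun q => ?_
    rw [if_neg fun h => hba (by simpa [h.2] using q.2), mul_zero]
  · simp [hP]

lemma phi_apply (k : Fin n) (y : V F n) {J I K : Fin n} (hIJ : I < J) (hIK : I ≤ K) :
    phi F n k y ⟨(J, I, K), hIJ, hIK⟩ =
      (if k = K then y ⟨(J, I), hIJ⟩ else 0)
      + (if k = I ∧ I < K then (if h : K < J then y ⟨(J, K), h⟩ else 0) else 0)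
      - (if k = I then (if h : J < K then y ⟨(K, J), h⟩ else 0) else 0) := by
  conv_lhs => rw [← (Pi.basisFun F (VIdx n)).sum_repr y]
  simp only [map_sum, map_smul, Finset.sum_apply, Pi.smul_apply, smul_eq_mul, Pi.basisFun_repr]
  rw [Finset.sum_congr rfl fun q _ => by rw [phi_basisFun_apply k q hIJ hIK]]
  simp only [mul_add, mul_sub, Finset.sum_add_distrib, Finset.sum_sub_distrib,
    sum_mul_ite_and_val_eq, dif_pos hIJ]

lemma Phi_apply (x : Fin n → V F n) {J I K : Fin n} (hIJ : I < J) (hIK : I ≤ K) :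
    Phi F n x ⟨(J, I, K), hIJ, hIK⟩ =
      x K ⟨(J, I), hIJ⟩
      + (if I < K then (if h : K < J then x I ⟨(J, K), h⟩ else 0) else 0)
      - (if h : J < K then x I ⟨(K, J), h⟩ else 0) := by
  simp only [Phi, LinearMap.coe_sum, Finset.sum_apply, LinearMap.comp_apply, LinearMap.proj_apply]
  rw [Finset.sum_congr rfl fun k _ => phi_apply k (x k) hIJ hIK]
  simp [Finset.sum_add_distrib, Finset.sum_sub_distrib, ite_and]

variable {x : Fin n → V F n}

lemma Phi_apply_eq_zero (hx : Phi F n x = 0) {J I K : Fin n} (hIJ : I < J) (hIK : I ≤ K) :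
    x K ⟨(J, I), hIJ⟩
      + (if I < K then (if h : K < J then x I ⟨(J, K), h⟩ else 0) else 0)
      - (if h : J < K then x I ⟨(K, J), h⟩ else 0) = 0 :=
  (Phi_apply x hIJ hIK).symm.trans (congrFun hx _)

lemma apply_eq_zero_of_Phi_eq_zero (hx : Phi F n x = 0) (k : Fin n) (q : VIdx n)
    (hk : q.1.1 = k ∨ q.1.2 = k) : x k q = 0 := by
  obtain ⟨⟨b, a⟩, hab : a < b⟩ := q
  rcases hk with rfl | rfl
  · simpa [hab, lt_irrefl] using Phi_apply_eq_zero hx hab hab.le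
  · simpa [hab.not_gt] using Phi_apply_eq_zero hx hab le_rfl

lemma apply_eq_apply_of_Phi_eq_zero (hx : Phi F n x = 0) {a b c : Fin n} (hab : a < b)
    (hbc : b < c) : x c ⟨(b, a), hab⟩ = x a ⟨(c, b), hbc⟩ := by
  have h := Phi_apply_eq_zero hx hab (hab.trans hbc).le
  rw [if_pos (hab.trans hbc), dif_neg hbc.not_gt, dif_pos hbc] at h
  linear_combination h

lemma apply_eq_neg_apply_of_Phi_eq_zero (hx : Phi F n x = 0) {a b c : Fin n} (hab : a < b)
    (hbc : b < c) : x a ⟨(c, b), hbc⟩ = -x b ⟨(c, a), hab.trans hbc⟩ := by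
  have h := Phi_apply_eq_zero hx (hab.trans hbc) hab.le
  rw [if_pos hab, dif_pos hbc, dif_neg hbc.not_gt] at h
  linear_combination h

end

theorem statement6_general (p : ℕ) [Fact p.Prime] (n : ℕ)
    (x : Fin n → V (ZMod p) n) (hx : Phi (ZMod p) n x = 0) :
    (∀ k : Fin n, ∀ q : VIdx n, q.1.1 = k ∨ q.1.2 = k → x k q = 0) ∧
    (∀ a b c : Fin n, ∀ hab : a < b, ∀ hbc : b < c,
      x c ⟨(b, a), hab⟩ = x a ⟨(c, b), hbc⟩ ∧
      x a ⟨(c, b), hbc⟩ = -x b ⟨(c, a), hab.trans hbc⟩) :=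
  ⟨apply_eq_zero_of_Phi_eq_zero hx, fun _ _ _ hab hbc =>
    ⟨apply_eq_apply_of_Phi_eq_zero hx hab hbc, apply_eq_neg_apply_of_Phi_eq_zero hx hab hbc⟩⟩

/-- Let `(x₁,…,x_n) ∈ ker(Φ_n)`, with coordinates `α^{(k)}[j,i] = x k ⟨(j,i)⟩`.  Then:
(i) `α^{(k)}[j,i] = 0` whenever `k = i` or `k = j`; and
(ii) for `a < b < c`, `α^{(c)}[b,a] = α^{(a)}[c,b] = −α^{(b)}[c,a]`. -/
theorem statement6 (p : ℕ) [Fact p.Prime] (hp2 : p ≠ 2) (n : ℕ) (hn : 1 < n)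
    (x : Fin n → V (ZMod p) n) (hx : Phi (ZMod p) n x = 0) :
    (∀ k : Fin n, ∀ q : VIdx n, q.1.1 = k ∨ q.1.2 = k → x k q = 0) ∧
    (∀ a b c : Fin n, ∀ hab : a < b, ∀ hbc : b < c,
      x c ⟨(b, a), hab⟩ = x a ⟨(c, b), hbc⟩ ∧
      x a ⟨(c, b), hbc⟩ = -x b ⟨(c, a), hab.trans hbc⟩) :=
  statement6_general p n x hx
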